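/- For a Dung framework AF and probability assignment P, the epistemic labeling of P is complete if and only if P is protective, strict, discharging, and trusting. -/
import Mathlib


/-- The three labels: in, out, undecided. -/
inductive Lab
  | lin
  | lout
  | lundec
deriving DecidableEq

variable {α : Type*}

open Classical in
/-- The epistemic labeling associated with a probability assignment. -/
noncomputable def epiLab (P : α → ℝ) (a : α) : Lab :=
  if 1/2 < P a then Lab.lin else if P a < 1/2 then Lab.lout else Lab.lundec

/-- A labeling is conflict-free: every out argument is legally out, and no
in argument attacks an in argument. -/
def ConflictFreeLab (att : α → α → Prop) (L : α → Lab) : Prop :=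
  (∀ a, L a = Lab.lout → ∃ b, att b a ∧ L b = Lab.lin) ∧
  (∀ a b, L a = Lab.lin → L b = Lab.lin → ¬ att a b)

/-- A labeling is admissible: every in argument is legally in and every out
argument is legally out. -/
def AdmissibleLab (att : α → α → Prop) (L : α → Lab) : Prop :=
  (∀ a, L a = Lab.lin → ∀ b, att b a → L b = Lab.lout) ∧
  (∀ a, L a = Lab.lout → ∃ b, att b a ∧ L b = Lab.lin)

/-- A labeling is complete: admissible and every undecided argument is
legally undecided. -/
def CompleteLab (att : α → α → Prop) (L : α → Lab) : Prop :=
  AdmissibleLab att L ∧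
  (∀ a, L a = Lab.lundec →
    (¬ ∀ b, att b a → L b = Lab.lout) ∧ (∀ b, att b a → L b ≠ Lab.lin))

/-- Protective (PRO). -/
def Protective (att : α → α → Prop) (P : α → ℝ) : Prop :=
  ∀ a b, att a b → 1/2 < P b → P a < 1/2

/-- Strict (STC). -/
def Strict (att : α → α → Prop) (P : α → ℝ) : Prop :=
  ∀ a b, att a b → 1/2 < P a → P b < 1/2

/-- Discharging (DIS). -/
def Discharging (att : α → α → Prop) (P : α → ℝ) : Prop :=
  ∀ b, P b < 1/2 → ∃ a, att a b ∧ 1/2 < P a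

/-- Trusting (TRU). -/
def Trusting (att : α → α → Prop) (P : α → ℝ) : Prop :=
  ∀ b, (∀ a, att a b → P a < 1/2) → 1/2 < P b

theorem epiLab_complete_iff (att : α → α → Prop) (P : α → ℝ)
    (hP : ∀ a, 0 ≤ P a ∧ P a ≤ 1) :
    CompleteLab att (epiLab P) ↔
      Protective att P ∧ Strict att P ∧ Discharging att P ∧ Trusting att P := by
  have hin : ∀ a, epiLab P a = Lab.lin ↔ 1/2 < P a := by
    intro a; unfold epiLab; split <;> rename_i h
    · simp only [h, iff_true]
    · split <;> simp only [*] <;> constructor <;> intro hx <;> first | cases hx | linarith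
  have hout : ∀ a, epiLab P a = Lab.lout ↔ P a < 1/2 := by
    intro a; unfold epiLab; split <;> rename_i h
    · constructor <;> intro h2 <;> [cases h2; linarith]
    · split <;> rename_i h2 <;> constructor <;> intro hx <;> (first | rfl | (cases hx; try linarith) | linarith)
  have hund : ∀ a, epiLab P a = Lab.lundec ↔ P a = 1/2 := by
    intro a; unfold epiLab; split <;> rename_i h
    · constructor <;> intro h2 <;> [cases h2; linarith]
    · split <;> rename_i h2
      · constructor <;> intro h3 <;> [cases h3; linarith]
      · constructor <;> intro _ <;> [linarith; rfl]
  constructor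
  · rintro ⟨⟨hadm1, hadm2⟩, hu⟩
    refine ⟨?_, ?_, ?_, ?_⟩
    · intro a b hab hb
      exact (hout a).mp (hadm1 b ((hin b).mpr hb) a hab)
    · intro a b hab ha
      by_contra hb
      rcases lt_trichotomy (P b) (1/2) with h | h | h
      · rcases hadm2 b ((hout b).mpr h) with ⟨c, hcb, hc⟩
        -- fine, but doesn't contradict; need different approach
        exact hb h
      · exact ((hu b ((hund b).mpr h)).2 a hab) ((hin a).mpr ha)
      · have := hadm1 b ((hin b).mpr h) a hab
        rw [hout] at this; linarith
    · intro b hb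
      rcases hadm2 b ((hout b).mpr hb) with ⟨a, hab, ha⟩
      exact ⟨a, hab, (hin a).mp ha⟩
    · intro b hb
      by_contra h
      rcases lt_trichotomy (P b) (1/2) with h2 | h2 | h2
      · rcases hadm2 b ((hout b).mpr h2) with ⟨a, hab, ha⟩
        rw [hin] at ha
        have := hb a hab; linarith
      · exact (hu b ((hund b).mpr h2)).1 (fun a hab => (hout a).mpr (hb a hab))
      · exact h h2
  · rintro ⟨hpro, hstc, hdis, htru⟩
    refine ⟨⟨?_, ?_⟩, ?_⟩
    · intro a ha b hba
      rw [hin] at ha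
      exact (hout b).mpr (hpro b a hba ha)
    · intro a ha
      rcases hdis a ((hout a).mp ha) with ⟨b, hba, hb⟩
      exact ⟨b, hba, (hin b).mpr hb⟩
    · intro a ha
      rw [hund] at ha
      constructor
      · intro hall
        have := htru a (fun b hba => (hout b).mp (hall b hba))
        linarith
      · intro b hba hb
        rw [hin] at hb
        have := hstc b a hba hb
        linarith
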